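/- arXiv:2205.15932 — 5 statements merged into one kernel-verified Lean document; each statement's English description precedes it below -/
import Mathlib

section
/- Let μ_α be the Bernoulli-type law (1 − α/2)δ₀ + (α/2)δ₂ with generating function G(t) = (1 − α/2) + (α/2)t², for 0 < α < 1. Then t_c := min{t ≥ 0 : 2(G(t) − tG'(t))² = t²G(t)G''(t)} equals √((2−α)/(3α)), and the inequality (t_c − 2)G(t_c) ≥ t_c(t_c − 1)G'(t_c) holds if and only if α ≤ 1/14. -/
/-!
Put `c = 2 - α` and `s = α t²`. Then `2 (G - t G')² - t² G G'' = c (c - 3 s) / 2`, so the only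
nonnegative root of the criticality equation is `t_c = √(c / (3α))`. At that root
`(t - 2) G - t (t - 1) G' = c (t - 3) / 3`, so the subcriticality inequality says `t_c ≥ 3`,
i.e. `c ≥ 27 α`, i.e. `α ≤ 1/14`.
-/

namespace BinaryArrivals

variable {α : ℝ}

lemma criticalEquation_iff (hα : α ≠ 0) (hα2 : α ≠ 2) (t : ℝ) :
    2 * ((1 - α / 2) + α / 2 * t ^ 2 - t * (α * t)) ^ 2
        = t ^ 2 * ((1 - α / 2) + α / 2 * t ^ 2) * α ↔
      t ^ 2 = (2 - α) / (3 * α) := by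
  have hc : 2 - α ≠ 0 := sub_ne_zero.mpr (Ne.symm hα2)
  rw [eq_div_iff (mul_ne_zero three_ne_zero hα), ← sub_eq_zero, ← sub_eq_zero (b := 2 - α)]
  have hdiff : 2 * ((1 - α / 2) + α / 2 * t ^ 2 - t * (α * t)) ^ 2
      - t ^ 2 * ((1 - α / 2) + α / 2 * t ^ 2) * α
        = -(2 - α) / 2 * (t ^ 2 * (3 * α) - (2 - α)) := by
    ring
  rw [hdiff, mul_eq_zero, or_iff_right (div_ne_zero (neg_ne_zero.mpr hc) two_ne_zero)]

lemma criticalSet_eq_singleton (hα : 0 < α) (hα2 : α < 2) :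
    {t : ℝ | 0 ≤ t ∧ 2 * ((1 - α / 2) + α / 2 * t ^ 2 - t * (α * t)) ^ 2
        = t ^ 2 * ((1 - α / 2) + α / 2 * t ^ 2) * α} = {√((2 - α) / (3 * α))} := by
  have hnonneg : 0 ≤ (2 - α) / (3 * α) := div_nonneg (by linarith) (by positivity)
  ext t
  simp only [Set.mem_ofPred_eq, Set.mem_singleton_iff, criticalEquation_iff hα.ne' hα2.ne]
  constructor
  · rintro ⟨ht, hsq⟩
    rw [hsq.symm, Real.sqrt_sq ht]
  · rintro rfl
    exact ⟨Real.sqrt_nonneg _, Real.sq_sqrt hnonneg⟩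

lemma subcriticalGap_eq_of_sq_eq (hα : α ≠ 0) {t : ℝ} (ht : t ^ 2 = (2 - α) / (3 * α)) :
    (t - 2) * ((1 - α / 2) + α / 2 * t ^ 2) - t * (t - 1) * (α * t)
      = (2 - α) / 3 * (t - 3) := by
  have hs : α * t ^ 2 = (2 - α) / 3 := by
    rw [ht]; field_simp
  linear_combination (-(t / 2)) * hs

lemma three_le_sqrt_iff (hα : 0 < α) : 3 ≤ √((2 - α) / (3 * α)) ↔ α ≤ 1 / 14 := by
  rw [Real.le_sqrt' three_pos, le_div_iff₀ (by positivity)]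
  constructor <;> intro h <;> linarith

end BinaryArrivals

open BinaryArrivals in
/-- For `Binary₀/₂` car arrivals `μ_α = (1 - α/2) δ₀ + (α/2) δ₂`, with
generating function `G(t) = (1 - α/2) + (α/2) t²`, the point
`t_c = min {t ≥ 0 : 2 (G t - t G' t)² = t² G t G'' t}` equals
`√((2 - α)/(3α))`, and the subcriticality inequality
`(t_c - 2) G(t_c) ≥ t_c (t_c - 1) G'(t_c)` holds iff `α ≤ 1/14`. -/
theorem stmt7 (α : ℝ) (hα : 0 < α) (hα1 : α < 1)
    (G G' G'' : ℝ → ℝ)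
    (hG : ∀ t, G t = (1 - α / 2) + (α / 2) * t ^ 2)
    (hG' : ∀ t, G' t = α * t)
    (hG'' : ∀ t, G'' t = α) :
    IsLeast {t : ℝ | 0 ≤ t ∧ 2 * (G t - t * G' t) ^ 2 = t ^ 2 * G t * G'' t}
      (Real.sqrt ((2 - α) / (3 * α))) ∧
    ((Real.sqrt ((2 - α) / (3 * α)) - 2) * G (Real.sqrt ((2 - α) / (3 * α)))
        ≥ Real.sqrt ((2 - α) / (3 * α)) * (Real.sqrt ((2 - α) / (3 * α)) - 1)
          * G' (Real.sqrt ((2 - α) / (3 * α)))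
      ↔ α ≤ 1 / 14) := by
  have hα2 : α < 2 := by linarith
  have htc : √((2 - α) / (3 * α)) ^ 2 = (2 - α) / (3 * α) :=
    Real.sq_sqrt (div_nonneg (by linarith) (by positivity))
  simp only [hG, hG', hG'']
  refine ⟨criticalSet_eq_singleton hα hα2 ▸ isLeast_singleton, ?_⟩
  rw [ge_iff_le, ← sub_nonneg, subcriticalGap_eq_of_sq_eq hα.ne' htc,
    mul_nonneg_iff_of_pos_left (by linarith), sub_nonneg, three_le_sqrt_iff hα]
end

section
/- Let G(t) = exp(α(t − 1)) be the generating function of the Poisson(α) law, α > 0. Then t_c := min{t ≥ 0 : 2(G(t) − tG'(t))² = t²G(t)G''(t)} equals (2 − √2)/α, and the inequality (t_c − 2)G(t_c) ≥ t_c(t_c − 1)G'(t_c) holds if and only if α ≤ 3 − 2√2. -/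
/-!
Since `G' = αG`, `G'' = α²G` and `G > 0`, dividing by `G²` turns the defining equation of `t_c`
into the quadratic `2 (1 - u)² = u²` in `u = αt`, whose roots are `2 ∓ √2`; so `t_c = (2 - √2)/α`.
Dividing the inequality by `G > 0` gives `αt(t - 1) ≤ t - 2`, which for `αt = u` fixed is linear
in `α`: it says `α ≤ u(1 - u)/(2 - u)`, and at `u = 2 - √2` this bound is `(√2 - 1)² = 3 - 2√2`.
-/

open Real

lemma two_mul_one_sub_sq_eq_sq_iff {u : ℝ} :
    2 * (1 - u) ^ 2 = u ^ 2 ↔ u = 2 - √2 ∨ u = 2 + √2 := by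
  have hs : √2 ^ 2 = 2 := sq_sqrt (by norm_num)
  have factor : 2 * (1 - u) ^ 2 - u ^ 2 = (u - (2 - √2)) * (u - (2 + √2)) := by
    linear_combination hs
  rw [← sub_eq_zero, factor, mul_eq_zero, sub_eq_zero, sub_eq_zero]

lemma isLeast_two_mul_one_sub_sq_eq_sq :
    IsLeast {u : ℝ | 0 ≤ u ∧ 2 * (1 - u) ^ 2 = u ^ 2} (2 - √2) := by
  have hs : √2 < 2 := by
    rw [sqrt_lt' two_pos]; norm_num
  refine ⟨⟨by linarith, two_mul_one_sub_sq_eq_sq_iff.2 (Or.inl rfl)⟩, ?_⟩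
  rintro u ⟨-, hu⟩
  rcases two_mul_one_sub_sq_eq_sq_iff.1 hu with rfl | rfl
  · exact le_rfl
  · linarith [sqrt_nonneg 2]

section CriticalPoint

variable {α t : ℝ} {G G' G'' : ℝ → ℝ}

lemma critical_equation_iff (hG' : ∀ t, G' t = α * G t) (hG'' : ∀ t, G'' t = α ^ 2 * G t)
    (hGt : G t ≠ 0) :
    2 * (G t - t * G' t) ^ 2 = t ^ 2 * G t * G'' t ↔ 2 * (1 - α * t) ^ 2 = (α * t) ^ 2 := by
  rw [hG', hG'', show 2 * (G t - t * (α * G t)) ^ 2 = 2 * (1 - α * t) ^ 2 * G t ^ 2 by ring,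
    show t ^ 2 * G t * (α ^ 2 * G t) = (α * t) ^ 2 * G t ^ 2 by ring]
  exact mul_left_inj' (pow_ne_zero 2 hGt)

lemma subcritical_iff (hG' : ∀ t, G' t = α * G t) (hGt : 0 < G t) :
    (t - 2) * G t ≥ t * (t - 1) * G' t ↔ α * t * (t - 1) ≤ t - 2 := by
  rw [hG', ge_iff_le, show t * (t - 1) * (α * G t) = α * t * (t - 1) * G t by ring]
  exact mul_le_mul_iff_of_pos_right hGt

end CriticalPoint

lemma mul_mul_sub_one_le_sub_two_iff {α u : ℝ} (hα : 0 < α) (hu : u < 2) :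
    α * (u / α) * (u / α - 1) ≤ u / α - 2 ↔ α ≤ u * (1 - u) / (2 - u) := by
  rw [le_div_iff₀ (by linarith), ← mul_le_mul_iff_of_pos_left hα]
  field_simp
  constructor <;> intro h <;> linarith

lemma two_sub_sqrt_two_mul_one_sub_div_eq : (2 - √2) * (1 - (2 - √2)) / (2 - (2 - √2)) = 3 - 2 * √2 := by
  have hs : √2 ^ 2 = 2 := sq_sqrt (by norm_num)
  have hs0 : √2 ≠ 0 := by positivity
  field_simp
  linear_combination hs

/-- For Poisson(α) car arrivals with generating function `G(t) = exp(α(t-1))`,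
the point `t_c = min {t ≥ 0 : 2 (G t - t G' t)² = t² G t G'' t}` equals
`(2 - √2)/α`, and the subcriticality inequality
`(t_c - 2) G(t_c) ≥ t_c (t_c - 1) G'(t_c)` holds iff `α ≤ 3 - 2√2`. -/
theorem stmt8 (α : ℝ) (hα : 0 < α)
    (G G' G'' : ℝ → ℝ)
    (hG : ∀ t, G t = Real.exp (α * (t - 1)))
    (hG' : ∀ t, G' t = α * G t)
    (hG'' : ∀ t, G'' t = α ^ 2 * G t) :
    IsLeast {t : ℝ | 0 ≤ t ∧ 2 * (G t - t * G' t) ^ 2 = t ^ 2 * G t * G'' t}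
      ((2 - Real.sqrt 2) / α) ∧
    (((2 - Real.sqrt 2) / α - 2) * G ((2 - Real.sqrt 2) / α)
        ≥ (2 - Real.sqrt 2) / α * ((2 - Real.sqrt 2) / α - 1)
          * G' ((2 - Real.sqrt 2) / α)
      ↔ α ≤ 3 - 2 * Real.sqrt 2) := by
  have hGpos : ∀ t, 0 < G t := fun t => hG t ▸ exp_pos _
  have hset : {t : ℝ | 0 ≤ t ∧ 2 * (G t - t * G' t) ^ 2 = t ^ 2 * G t * G'' t}
      = (fun u => u / α) '' {u : ℝ | 0 ≤ u ∧ 2 * (1 - u) ^ 2 = u ^ 2} := by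
    ext t
    simp only [Set.mem_ofPred_eq, Set.mem_image, critical_equation_iff hG' hG'' (hGpos t).ne']
    constructor
    · rintro ⟨ht, h⟩
      exact ⟨α * t, ⟨by positivity, h⟩, by field_simp⟩
    · rintro ⟨u, ⟨hu, h⟩, rfl⟩
      exact ⟨by positivity, by rwa [mul_div_cancel₀ u hα.ne']⟩
  refine ⟨?_, ?_⟩
  · rw [hset]
    exact (monotone_div_right_of_nonneg hα.le).map_isLeast isLeast_two_mul_one_sub_sq_eq_sq
  · rw [subcritical_iff hG' (hGpos _), mul_mul_sub_one_le_sub_two_iff hα (by linarith [sqrt_pos.2 two_pos]),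
      two_sub_sqrt_two_mul_one_sub_div_eq]
end

section
/- Let G(t) = 1/(1 + α − αt) be the generating function of the Geometric law with parameter p = α/(1+α), for 0 < α and t < (1+α)/α. Then t_c := min{t ≥ 0 : 2(G(t) − tG'(t))² = t²G(t)G''(t)} equals (1+α)/(3α), and the subcriticality inequality (t_c − 2)G(t_c) ≥ t_c(t_c − 1)G'(t_c) holds if and only if α ≤ 1/8. -/
/-!
Write `D = 1 + α - α t > 0`. Then `G - t G' = (D - α t) / D²` and `t² G G'' = 2 (α t)² / D⁴`, so the
criticality equation reduces to `(D - α t)² = (α t)²`, i.e. `D = 2 α t`, whose only solution is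
`t = (1 + α) / (3 α)`. There `D = 2 (1 + α) / 3`, and the subcriticality gap
`(t - 2) G(t) - t (t - 1) G'(t)` equals `(1 - 8 α) / (4 α (1 + α))`.
-/

section
variable {α t : ℝ}

lemma one_add_sub_mul_pos_of_lt_div (hα : 0 < α) (ht : t < (1 + α) / α) :
    0 < 1 + α - α * t := by
  rw [lt_div_iff₀ hα] at ht
  linarith

lemma geom_criticality_iff (hα : 0 < α) (hD : 0 < 1 + α - α * t) :
    2 * (1 / (1 + α - α * t) - t * (α / (1 + α - α * t) ^ 2)) ^ 2
        = t ^ 2 * (1 / (1 + α - α * t)) * (2 * α ^ 2 / (1 + α - α * t) ^ 3)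
      ↔ t = (1 + α) / (3 * α) := by
  set D := 1 + α - α * t
  have hsq : 2 * (1 / D - t * (α / D ^ 2)) ^ 2 = 2 * (D - α * t) ^ 2 / D ^ 4 := by
    field_simp
  have hrhs : t ^ 2 * (1 / D) * (2 * α ^ 2 / D ^ 3) = 2 * (α * t) ^ 2 / D ^ 4 := by
    field_simp
  rw [hsq, hrhs, div_left_inj' (by positivity), mul_right_inj' two_ne_zero, sq_eq_sq_iff_eq_or_eq_neg,
    eq_div_iff (by positivity)]
  constructor
  · rintro (h | h)
    · linarith
    · linarith
  · intro h
    left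
    linarith

lemma geom_subcriticality_gap (hα : 0 < α) :
    ((1 + α) / (3 * α) - 2) * (1 / (1 + α - α * ((1 + α) / (3 * α))))
        - (1 + α) / (3 * α) * ((1 + α) / (3 * α) - 1)
          * (α / (1 + α - α * ((1 + α) / (3 * α))) ^ 2)
      = (1 - 8 * α) / (4 * α * (1 + α)) := by
  have hD : 1 + α - α * ((1 + α) / (3 * α)) = 2 * (1 + α) / 3 := by field_simp; ring
  rw [hD]
  field_simp
  ring
end

/-- For Geometric car arrivals with mean `α`, generating function
`G(t) = 1/(1 + α - α t)` on `t < (1+α)/α`, the point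
`t_c = min {t ≥ 0 (in the domain) : 2 (G t - t G' t)² = t² G t G'' t}` equals
`(1+α)/(3α)`, and the subcriticality inequality
`(t_c - 2) G(t_c) ≥ t_c (t_c - 1) G'(t_c)` holds iff `α ≤ 1/8`. -/
theorem stmt9 (α : ℝ) (hα : 0 < α)
    (G G' G'' : ℝ → ℝ)
    (hG : ∀ t, t < (1 + α) / α → G t = 1 / (1 + α - α * t))
    (hG' : ∀ t, t < (1 + α) / α → G' t = α / (1 + α - α * t) ^ 2)
    (hG'' : ∀ t, t < (1 + α) / α → G'' t = 2 * α ^ 2 / (1 + α - α * t) ^ 3) :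
    IsLeast {t : ℝ | 0 ≤ t ∧ t < (1 + α) / α ∧
        2 * (G t - t * G' t) ^ 2 = t ^ 2 * G t * G'' t}
      ((1 + α) / (3 * α)) ∧
    (((1 + α) / (3 * α) - 2) * G ((1 + α) / (3 * α))
        ≥ (1 + α) / (3 * α) * ((1 + α) / (3 * α) - 1) * G' ((1 + α) / (3 * α))
      ↔ α ≤ 1 / 8) := by
  have htc : (1 + α) / (3 * α) < (1 + α) / α :=
    div_lt_div_of_pos_left (by linarith) hα (by linarith)
  refine ⟨⟨⟨by positivity, htc, ?_⟩, ?_⟩, ?_⟩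
  · rw [hG _ htc, hG' _ htc, hG'' _ htc]
    exact (geom_criticality_iff hα (one_add_sub_mul_pos_of_lt_div hα htc)).2 rfl
  · rintro t ⟨-, ht, heq⟩
    rw [hG t ht, hG' t ht, hG'' t ht] at heq
    exact ((geom_criticality_iff hα (one_add_sub_mul_pos_of_lt_div hα ht)).1 heq).ge
  · rw [hG _ htc, hG' _ htc, ge_iff_le, ← sub_nonneg, geom_subcriticality_gap hα,
      le_div_iff₀ (by positivity), zero_mul, sub_nonneg]
    constructor <;> intro h <;> linarith
end

section
/- Suppose t_c > 1 satisfies (t_c − 2)G(t_c) = t_c(t_c − 1)G'(t_c) and G is a probability generating function (so G(1) = 1, G convex increasing on [0, t_c]). Then G(t_c) ≤ t_c/2 and consequently x_c := t_c²/(4(t_c − 1)G(t_c)) satisfies x_c ≥ t_c/(2(t_c − 1)) > 1/2. -/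
/-- If `t_c > 1` satisfies the criticality equation
`(t_c - 2) G(t_c) = t_c (t_c - 1) G'(t_c)` for a probability generating
function `G` (convex, nondecreasing, `G(1) = 1`, with derivative `G'` on
`[0, t_c]`), then `G(t_c) ≤ t_c/2` and consequently
`x_c = t_c²/(4(t_c - 1) G(t_c)) ≥ t_c/(2(t_c - 1)) > 1/2`. -/
theorem stmt16 (G G' : ℝ → ℝ) (tc : ℝ) (htc : 1 < tc)
    (hG1 : G 1 = 1)
    (hconv : ConvexOn ℝ (Set.Icc 0 tc) G)
    (hmono : MonotoneOn G (Set.Icc 0 tc))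
    (hderiv : ∀ t ∈ Set.Icc (0 : ℝ) tc, HasDerivAt G (G' t) t)
    (heq : (tc - 2) * G tc = tc * (tc - 1) * G' tc) :
    G tc ≤ tc / 2 ∧
    tc ^ 2 / (4 * (tc - 1) * G tc) ≥ tc / (2 * (tc - 1)) ∧
    tc / (2 * (tc - 1)) > 1 / 2 := by
  have h1mem : (1 : ℝ) ∈ Set.Icc (0 : ℝ) tc := ⟨by norm_num, le_of_lt htc⟩
  have htcmem : tc ∈ Set.Icc (0 : ℝ) tc := ⟨by linarith, le_refl _⟩
  have hGpos : (0 : ℝ) < G tc := by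
    have := hmono h1mem htcmem (le_of_lt htc)
    rw [hG1] at this; linarith
  have hslope : slope G 1 tc ≤ G' tc :=
    hconv.slope_le_of_hasDerivAt h1mem htcmem htc (hderiv tc htcmem)
  rw [slope_def_field, div_le_iff₀ (by linarith)] at hslope
  -- hslope : G tc - G 1 ≤ G' tc * (tc - 1)
  have htpos : (0 : ℝ) < tc := by linarith
  have hkey : G tc ≤ tc / 2 := by
    rw [hG1] at hslope
    nlinarith [hslope, heq, htpos]
  refine ⟨hkey, ?_, ?_⟩
  · have hden : (0 : ℝ) < 4 * (tc - 1) * G tc := by nlinarith [hGpos]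
    rw [ge_iff_le, div_le_div_iff₀ (by linarith) hden]
    nlinarith [mul_le_mul_of_nonneg_left hkey (show (0:ℝ) ≤ 4*tc*(tc-1) by nlinarith)]
  · rw [gt_iff_lt, div_lt_div_iff₀ (by norm_num) (by linarith)]
    linarith
end

section
/- Let k ≥ 3 and μ = (1 − α/k)δ₀ + (α/k)δ_k with generating function G(t) = (1 − α/k) + (α/k)t^k. The parking process on the binary tree with these arrivals is subcritical if and only if α ≤ α_c(k) where α_c(k) = k / (1 + 2^{−k−2}(3 + √((k+7)/(k−1)))^k · ((k−1)(k+4) + k√((k+7)(k−1)))). -/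
set_option maxHeartbeats 2000000


/-- For `Binary₀/ₖ` arrivals `μ = (1 - α/k) δ₀ + (α/k) δ_k`, `k ≥ 3`, with
generating function `G(t) = (1 - α/k) + (α/k) t^k`, the parking process on the
binary tree is subcritical — i.e. (by Theorem 1) the criterion
`(t_c - 2) G(t_c) ≥ t_c (t_c - 1) G'(t_c)` holds at
`t_c = min {t ≥ 0 : 2 (G t - t G' t)² = t² G t G'' t}` — if and only if
`α ≤ α_c(k) = k / (1 + 2^(-k-2) (3 + √((k+7)/(k-1)))^k ((k-1)(k+4) + k √((k+7)(k-1))))`. -/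
theorem stmt19 (k : ℕ) (hk : 3 ≤ k) (α : ℝ) (hα : 0 < α) (hαk : α < k)
    (G G' G'' : ℝ → ℝ)
    (hG : ∀ t, G t = (1 - α / k) + (α / k) * t ^ k)
    (hG' : ∀ t, G' t = α * t ^ (k - 1))
    (hG'' : ∀ t, G'' t = α * ((k : ℝ) - 1) * t ^ (k - 2)) :
    ∀ tc : ℝ,
      IsLeast {t : ℝ | 0 ≤ t ∧ 2 * (G t - t * G' t) ^ 2 = t ^ 2 * G t * G'' t} tc →
      ((tc - 2) * G tc ≥ tc * (tc - 1) * G' tc ↔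
        α ≤ (k : ℝ) /
          (1 + (2 : ℝ) ^ (-(k : ℝ) - 2)
              * (3 + Real.sqrt (((k : ℝ) + 7) / ((k : ℝ) - 1))) ^ k
              * (((k : ℝ) - 1) * ((k : ℝ) + 4)
                  + k * Real.sqrt (((k : ℝ) + 7) * ((k : ℝ) - 1))))) := by
  intro tc htc
  obtain ⟨m, rfl⟩ : ∃ m, k = m + 3 := ⟨k - 3, by omega⟩
  clear hk
  simp only [show m + 3 - 1 = m + 2 from rfl] at hG'
  simp only [show m + 3 - 2 = m + 1 from rfl] at hG''
  set K : ℝ := ((m + 3 : ℕ) : ℝ) with hKdef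
  clear_value K
  have hK3 : (3 : ℝ) ≤ K := by
    rw [hKdef]; push_cast; linarith [Nat.cast_nonneg (α := ℝ) m]
  have hK0 : (0 : ℝ) < K := by linarith
  have hKα : α < K := hαk
  have hK2 : (0 : ℝ) < K - 2 := by linarith
  have hK1 : (0 : ℝ) < K - 1 := by linarith
  -- the square root s and basic facts about it
  set s : ℝ := Real.sqrt ((K + 7) / (K - 1)) with hsdef
  clear_value s
  have hs0 : 0 < s := by rw [hsdef]; exact Real.sqrt_pos.mpr (by positivity)
  have hs2 : s ^ 2 * (K - 1) = K + 7 := by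
    have h := Real.sq_sqrt (show (0:ℝ) ≤ (K + 7) / (K - 1) by positivity)
    rw [hsdef, h]; field_simp
  have hs1 : 1 < s := by
    have h : (1:ℝ) ^ 2 < s ^ 2 := by nlinarith [hs2]
    exact lt_of_pow_lt_pow_left₀ 2 hs0.le h
  have hKs : K * s < K + 4 := by
    have h : (K * s) ^ 2 < (K + 4) ^ 2 := by nlinarith [hs2]
    exact lt_of_pow_lt_pow_left₀ 2 (by linarith) h
  have hKs' : 0 < K + 4 - K * s := by linarith
  have h3 : K + 1 < (K - 1) * s := by
    have h : (K + 1) ^ 2 < ((K - 1) * s) ^ 2 := by nlinarith [hs2]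
    exact lt_of_pow_lt_pow_left₀ 2 (by positivity) h
  have hsq2 : Real.sqrt ((K + 7) * (K - 1)) = (K - 1) * s := by
    rw [show (K + 7) * (K - 1) = ((K - 1) * s) ^ 2 by nlinarith [hs2],
      Real.sqrt_sq (by positivity)]
  rw [hsq2]
  -- the two roots of the quadratic in X = t^(m+3)
  set x : ℝ := (K - α) * (K + 4 - K * s) / (2 * α * (K - 2)) with hxdef
  set y : ℝ := (K - α) * (K + 4 + K * s) / (2 * α * (K - 2)) with hydef
  clear_value x y
  have hx0 : 0 < x := by
    rw [hxdef]; exact div_pos (mul_pos (by linarith) hKs') (by positivity)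
  have hxy : x ≤ y := by
    rw [hxdef, hydef]
    have hnum : (K - α) * (K + 4 - K * s) ≤ (K - α) * (K + 4 + K * s) := by
      nlinarith [mul_pos (mul_pos hK0 hs0) (show (0:ℝ) < K - α by linarith)]
    exact (div_le_div_iff_of_pos_right (show (0:ℝ) < 2 * α * (K - 2) by positivity)).mpr hnum
  -- sum and product of roots
  have hsum : α * (K - 2) * (x + y) = (K - α) * (K + 4) := by
    rw [hxdef, hydef]; field_simp; ring
  have hprod : α ^ 2 * (K - 1) * (K - 2) * (x * y) = 2 * (K - α) ^ 2 := by
    rw [hxdef, hydef, div_mul_div_comm, ← mul_div_assoc,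
      div_eq_iff (by positivity : (2 * α * (K - 2)) * (2 * α * (K - 2)) ≠ 0)]
    linear_combination (-(α^2) * (K - 2) * (K - α)^2 * K^2) * hs2
  -- key polynomial factorization
  have poly : ∀ X : ℝ, 2 * ((K - α) - α * (K - 1) * X) ^ 2
        - K * α * (K - 1) * X * ((K - α) + α * X)
      = α ^ 2 * (K - 1) * (K - 2) * ((X - x) * (X - y)) := by
    intro X
    linear_combination (α * (K - 1) * X) * hsum - hprod
  -- explicit form of G
  have hGt : ∀ t : ℝ, G t = ((K - α) + α * t ^ (m + 3)) / K := by
    intro t; rw [hG t]; field_simp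
  have lhs_eq : ∀ t : ℝ, K ^ 2 * (2 * (G t - t * G' t) ^ 2)
      = 2 * ((K - α) - α * (K - 1) * t ^ (m + 3)) ^ 2 := by
    intro t; rw [hGt t, hG' t]; field_simp; ring
  have rhs_eq : ∀ t : ℝ, K ^ 2 * (t ^ 2 * G t * G'' t)
      = K * α * (K - 1) * t ^ (m + 3) * ((K - α) + α * t ^ (m + 3)) := by
    intro t; rw [hGt t, hG'' t]; field_simp; ring
  have hcne : α ^ 2 * (K - 1) * (K - 2) ≠ 0 :=
    ne_of_gt (mul_pos (mul_pos (pow_pos hα 2) hK1) hK2)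
  -- membership in the set
  have mem_iff : ∀ t : ℝ, (2 * (G t - t * G' t) ^ 2 = t ^ 2 * G t * G'' t) ↔
      (t ^ (m + 3) - x) * (t ^ (m + 3) - y) = 0 := by
    intro t
    constructor
    · intro h
      have hs' : 2 * ((K - α) - α * (K - 1) * t ^ (m + 3)) ^ 2
          = K * α * (K - 1) * t ^ (m + 3) * ((K - α) + α * t ^ (m + 3)) := by
        rw [← lhs_eq t, ← rhs_eq t, h]
      have h0 : α ^ 2 * (K - 1) * (K - 2) * ((t ^ (m + 3) - x) * (t ^ (m + 3) - y)) = 0 := by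
        linear_combination hs' - poly (t ^ (m + 3))
      exact (mul_eq_zero.mp h0).resolve_left hcne
    · intro h
      have hs' : K ^ 2 * (2 * (G t - t * G' t) ^ 2) = K ^ 2 * (t ^ 2 * G t * G'' t) := by
        rw [lhs_eq t, rhs_eq t]
        linear_combination poly (t ^ (m + 3)) + (α ^ 2 * (K - 1) * (K - 2)) * h
      exact mul_left_cancel₀ (pow_ne_zero 2 (ne_of_gt hK0)) hs'
  -- identify tc : tc^(m+3) = x
  obtain ⟨⟨htc0, htceq⟩, hlb⟩ := htc
  set t₀ : ℝ := x ^ (((m + 3 : ℕ) : ℝ))⁻¹ with ht₀def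
  clear_value t₀
  have ht₀pow : t₀ ^ (m + 3) = x := by
    rw [ht₀def]
    exact Real.rpow_inv_natCast_pow hx0.le (show m + 3 ≠ 0 by omega)
  have ht₀0 : 0 ≤ t₀ := by rw [ht₀def]; exact Real.rpow_nonneg hx0.le _
  have ht₀mem : t₀ ∈ {t : ℝ | 0 ≤ t ∧ 2 * (G t - t * G' t) ^ 2 = t ^ 2 * G t * G'' t} := by
    refine ⟨ht₀0, (mem_iff t₀).mpr ?_⟩
    rw [ht₀pow]; ring
  have hle : tc ≤ t₀ := hlb ht₀mem
  have hXle : tc ^ (m + 3) ≤ x := by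
    calc tc ^ (m + 3) ≤ t₀ ^ (m + 3) := pow_le_pow_left₀ htc0 hle _
    _ = x := ht₀pow
  have hX : tc ^ (m + 3) = x := by
    rcases mul_eq_zero.mp ((mem_iff tc).mp htceq) with h | h
    · linarith [sub_eq_zero.mp h]
    · have := sub_eq_zero.mp h
      linarith
  -- the criterion rewritten:  B ≤ tc * A
  have h1 : K * ((tc - 2) * G tc) = (tc - 2) * ((K - α) + α * x) := by
    rw [hGt tc, ← hX]; field_simp
  have h2 : K * (tc * (tc - 1) * G' tc) = K * ((tc - 1) * (α * x)) := by
    rw [hG' tc, ← hX]; ring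
  have step1 : ((tc - 2) * G tc ≥ tc * (tc - 1) * G' tc) ↔
      (2 * (K - α) - (K - 2) * (α * x)) ≤ tc * ((K - α) - (K - 1) * (α * x)) := by
    constructor
    · intro h
      have hd : 0 ≤ K * ((tc - 2) * G tc - tc * (tc - 1) * G' tc) :=
        mul_nonneg hK0.le (by linarith [h])
      linarith [hd, h1, h2]
    · intro h
      by_contra hcon
      push_neg at hcon
      have hneg : K * ((tc - 2) * G tc - tc * (tc - 1) * G' tc) < 0 :=
        mul_neg_of_pos_of_neg hK0 (by linarith)
      linarith [hneg, h1, h2, h]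
  clear hsum hprod poly hGt lhs_eq rhs_eq hcne mem_iff hlb htceq ht₀mem ht₀pow ht₀0 hle hXle h1 h2 hG hG' hG'' ht₀def
  -- A > 0 and 2B = A(3+s)
  have hA' : ((K - α) - (K - 1) * (α * x)) * (2 * (K - 2))
      = (K - α) * K * ((K - 1) * s - (K + 1)) := by
    rw [hxdef]; field_simp; ring
  have hA : 0 < (K - α) - (K - 1) * (α * x) := by
    have h0 : 0 < ((K - α) - (K - 1) * (α * x)) * (2 * (K - 2)) := by
      rw [hA']
      exact mul_pos (mul_pos (show (0:ℝ) < K - α by linarith) hK0)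
        (show (0:ℝ) < (K - 1) * s - (K + 1) by linarith)
    by_contra hc
    push_neg at hc
    have hnp : ((K - α) - (K - 1) * (α * x)) * (2 * (K - 2)) ≤ 0 :=
      mul_nonpos_iff.mpr (Or.inr ⟨hc, by linarith⟩)
    linarith
  have hB' : (2 * (K - α) - (K - 2) * (α * x)) * 2 = (K - α) * K * (s - 1) := by
    rw [hxdef]; field_simp; ring
  have h2B : 2 * (2 * (K - α) - (K - 2) * (α * x))
      = ((K - α) - (K - 1) * (α * x)) * (3 + s) := by
    have h0 : (2 * (2 * (K - α) - (K - 2) * (α * x))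
        - ((K - α) - (K - 1) * (α * x)) * (3 + s)) * (2 * (K - 2)) = 0 := by
      linear_combination (2 * (K - 2)) * hB' - (3 + s) * hA' - (K - α) * K * hs2
    rcases mul_eq_zero.mp h0 with h | h
    · linarith
    · linarith
  have step2 : ((2 * (K - α) - (K - 2) * (α * x)) ≤ tc * ((K - α) - (K - 1) * (α * x))) ↔
      (3 + s) / 2 ≤ tc := by
    constructor
    · intro h
      have h' : ((K - α) - (K - 1) * (α * x)) * (3 + s)
          ≤ ((K - α) - (K - 1) * (α * x)) * (2 * tc) := by linarith [h, h2B]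
      have := (mul_le_mul_iff_of_pos_left hA).mp h'
      linarith
    · intro h
      have h' : ((K - α) - (K - 1) * (α * x)) * (3 + s)
          ≤ ((K - α) - (K - 1) * (α * x)) * (2 * tc) :=
        (mul_le_mul_iff_of_pos_left hA).mpr (by linarith)
      linarith [h', h2B]
  have step3 : ((3 + s) / 2 ≤ tc) ↔ ((3 + s) / 2) ^ (m + 3) ≤ x := by
    rw [← hX]
    exact (pow_le_pow_iff_left₀ (by positivity) htc0 (by omega)).symm
  have step4 : (((3 + s) / 2) ^ (m + 3) ≤ x) ↔
      ((3 + s) / 2) ^ (m + 3) * (2 * α * (K - 2)) ≤ (K - α) * (K + 4 - K * s) := by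
    rw [hxdef]
    exact le_div_iff₀ (by positivity)
  -- the threshold constant D
  set D : ℝ := (2 : ℝ) ^ (-K - 2) * (3 + s) ^ (m + 3)
      * ((K - 1) * (K + 4) + K * ((K - 1) * s)) with hDdef
  clear_value D
  have hQ0 : 0 < (K - 1) * (K + 4) + K * ((K - 1) * s) := by
    nlinarith [mul_pos hK1 (show (0:ℝ) < K + 4 by linarith),
      mul_pos (mul_pos hK0 hK1) hs0]
  have hD0 : 0 < D := by
    rw [hDdef]
    exact mul_pos (mul_pos (Real.rpow_pos_of_pos two_pos _)
      (pow_pos (by linarith) _)) hQ0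
  have hrp : (2 : ℝ) ^ (-K - 2) * (4 * (2 : ℝ) ^ (m + 3)) = 1 := by
    have h4 : (4 * (2 : ℝ) ^ (m + 3)) = (2 : ℝ) ^ ((K + 2 : ℝ)) := by
      rw [show (K + 2 : ℝ) = ((m + 5 : ℕ) : ℝ) by rw [hKdef]; push_cast; ring,
        Real.rpow_natCast]
      ring
    rw [h4, ← Real.rpow_add two_pos]
    norm_num
  have hDval : D * (4 * (2 : ℝ) ^ (m + 3))
      = (3 + s) ^ (m + 3) * ((K - 1) * (K + 4) + K * ((K - 1) * s)) := by
    rw [hDdef]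
    linear_combination ((3 + s) ^ (m + 3) * ((K - 1) * (K + 4) + K * ((K - 1) * s))) * hrp
  have hCpow : ((3 + s) / 2) ^ (m + 3) * (2 : ℝ) ^ (m + 3) = (3 + s) ^ (m + 3) := by
    rw [div_pow]
    field_simp
  -- the two product identities
  have hWF : (0:ℝ) < ((K - 1) * (K + 4 + K * s)) * (4 * (2 : ℝ) ^ (m + 3)) := by
    have : (0:ℝ) < K + 4 + K * s := by nlinarith [mul_pos hK0 hs0]
    positivity
  have J1 : ((K - α) * (K + 4 - K * s)) * (((K - 1) * (K + 4 + K * s)) * (4 * (2 : ℝ) ^ (m + 3)))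
      = ((K - α) * (8 * (K - 2))) * (4 * (2 : ℝ) ^ (m + 3)) := by
    linear_combination (-(K - α) * K ^ 2 * (4 * (2 : ℝ) ^ (m + 3))) * hs2
  have J2 : (((3 + s) / 2) ^ (m + 3) * (2 * α * (K - 2)))
        * (((K - 1) * (K + 4 + K * s)) * (4 * (2 : ℝ) ^ (m + 3)))
      = ((α * D) * (8 * (K - 2))) * (4 * (2 : ℝ) ^ (m + 3)) := by
    linear_combination (8 * α * (K - 2) * ((K - 1) * (K + 4) + K * ((K - 1) * s))) * hCpow
      - (8 * α * (K - 2)) * hDval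
  have final_iff : (((3 + s) / 2) ^ (m + 3) * (2 * α * (K - 2)) ≤ (K - α) * (K + 4 - K * s))
      ↔ α * D ≤ K - α := by
    have hF2 : (0:ℝ) < 4 * (2 : ℝ) ^ (m + 3) := by positivity
    have hF3 : (0:ℝ) < 8 * (K - 2) := by linarith
    constructor
    · intro h
      have h1' := (mul_le_mul_iff_of_pos_right hWF).mpr h
      have h2' : (α * D) * (8 * (K - 2)) * (4 * (2 : ℝ) ^ (m + 3))
          ≤ (K - α) * (8 * (K - 2)) * (4 * (2 : ℝ) ^ (m + 3)) := by
        linarith [J1, J2, h1']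
      have h3' := (mul_le_mul_iff_of_pos_right hF2).mp h2'
      exact (mul_le_mul_iff_of_pos_right hF3).mp h3'
    · intro h
      have h2' : (α * D) * (8 * (K - 2)) * (4 * (2 : ℝ) ^ (m + 3))
          ≤ (K - α) * (8 * (K - 2)) * (4 * (2 : ℝ) ^ (m + 3)) :=
        (mul_le_mul_iff_of_pos_right hF2).mpr ((mul_le_mul_iff_of_pos_right hF3).mpr h)
      have h1' : (((3 + s) / 2) ^ (m + 3) * (2 * α * (K - 2)))
            * (((K - 1) * (K + 4 + K * s)) * (4 * (2 : ℝ) ^ (m + 3)))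
          ≤ ((K - α) * (K + 4 - K * s))
            * (((K - 1) * (K + 4 + K * s)) * (4 * (2 : ℝ) ^ (m + 3))) := by
        linarith [J1, J2, h2']
      exact (mul_le_mul_iff_of_pos_right hWF).mp h1'
  have step6 : (α ≤ K / (1 + D)) ↔ α * D ≤ K - α := by
    rw [le_div_iff₀ (by linarith : (0:ℝ) < 1 + D)]
    constructor <;> intro h <;> nlinarith [h]
  exact step1.trans (step2.trans (step3.trans (step4.trans (final_iff.trans step6.symm))))
end
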